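/- Let L ≥ 2 be an integer and μ_1, …, μ_L, μ_min real numbers with μ_t ≥ μ_min > 0 for all t. Define J(p) = Σ_{t=1}^{L} μ_t (1-p)^{t-1} and F(θ) = J(σ(θ)), and let θ : ℝ → ℝ be differentiable with θ'(s) = F'(θ(s)) for all s ≥ 0. Then the stopping probability p(s) = σ(θ(s)) is differentiable in s with p'(s) = p(s)² (1 - p(s))² · J'(p(s)), and consequently p'(s) ≤ -μ_min · p(s)² (1 - p(s))² for all s ≥ 0. -/

import Mathlib

open Finset

/-- The sigmoid function `σ(θ) = 1 / (1 + exp (-θ))`. -/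
noncomputable def sigmoid (x : ℝ) : ℝ := 1 / (1 + Real.exp (-x))

lemma sigmoid_pos (x : ℝ) : 0 < sigmoid x := by
  unfold sigmoid; positivity

lemma sigmoid_lt_one (x : ℝ) : sigmoid x < 1 := by
  unfold sigmoid
  rw [div_lt_one (by positivity)]
  linarith [Real.exp_pos (-x)]

lemma sigmoid_hasDerivAt (x : ℝ) :
    HasDerivAt sigmoid (sigmoid x * (1 - sigmoid x)) x := by
  have hu : HasDerivAt (fun x : ℝ => 1 + Real.exp (-x)) (-Real.exp (-x)) x := by
    have := (Real.hasDerivAt_exp (-x)).comp x (hasDerivAt_neg x)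
    simpa using this.const_add 1
  have hne : (1 : ℝ) + Real.exp (-x) ≠ 0 := by positivity
  have h := hu.inv hne
  have hsig : sigmoid = fun x => (1 + Real.exp (-x))⁻¹ := by
    funext y; simp [sigmoid, one_div]
  have h2 : HasDerivAt sigmoid (-(-Real.exp (-x)) / (1 + Real.exp (-x)) ^ 2) x := by
    rw [hsig]; exact h
  convert h2 using 1
  have h1 : 1 - sigmoid x = Real.exp (-x) / (1 + Real.exp (-x)) := by
    unfold sigmoid; field_simp; ring
  rw [h1]
  unfold sigmoid; field_simp

/-- Under gradient flow `θ'(s) = F'(θ(s))` with `F(θ) = J(σ(θ))` and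
`J(p) = ∑_{t=1}^L μ_t (1-p)^{t-1}`, `μ_t ≥ μ_min > 0`: the stopping probability
`p(s) = σ(θ(s))` is differentiable in `s` with
`p'(s) = p(s)² (1 - p(s))² · J'(p(s))`, and consequently
`p'(s) ≤ -μ_min · p(s)² (1 - p(s))²` for all `s ≥ 0`. -/
theorem stopping_prob_deriv
    (L : ℕ) (hL : 2 ≤ L) (μ : ℕ → ℝ) (μmin : ℝ)
    (hμmin : 0 < μmin) (hμ : ∀ t ∈ Finset.Icc 1 L, μmin ≤ μ t)
    (J F : ℝ → ℝ)
    (hJ : ∀ q : ℝ, J q = ∑ t ∈ Finset.Icc 1 L, μ t * (1 - q) ^ (t - 1))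
    (hF : ∀ x : ℝ, F x = J (sigmoid x))
    (θ : ℝ → ℝ) (hθ : Differentiable ℝ θ)
    (hflow : ∀ s : ℝ, 0 ≤ s → deriv θ s = deriv F (θ s))
    (p : ℝ → ℝ) (hp : ∀ s, p s = sigmoid (θ s)) :
    ∀ s : ℝ, 0 ≤ s →
      HasDerivAt p (p s ^ 2 * (1 - p s) ^ 2 * deriv J (p s)) s ∧
      deriv p s ≤ -μmin * (p s ^ 2 * (1 - p s) ^ 2) := by
  have hJfun : J = fun q => ∑ t ∈ Finset.Icc 1 L, μ t * (1 - q) ^ (t - 1) := funext hJ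
  have hFfun : F = fun x => J (sigmoid x) := funext hF
  have hpfun : p = fun s => sigmoid (θ s) := funext hp
  set D : ℝ → ℝ := fun q => ∑ t ∈ Finset.Icc 1 L,
      μ t * (((t - 1 : ℕ) : ℝ) * (1 - q) ^ (t - 1 - 1) * (-1)) with hD
  have hJd : ∀ q : ℝ, HasDerivAt J (D q) q := by
    intro q
    rw [hJfun]
    apply HasDerivAt.fun_sum
    intro t _
    exact (((hasDerivAt_id q).const_sub 1).pow (t - 1)).const_mul (μ t)
  intro s hs
  have hq0 : 0 < sigmoid (θ s) := sigmoid_pos _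
  have hq1 : sigmoid (θ s) < 1 := sigmoid_lt_one _
  have hθd : HasDerivAt θ (deriv θ s) s := (hθ s).hasDerivAt
  have hFd : ∀ x : ℝ, HasDerivAt F (D (sigmoid x) * (sigmoid x * (1 - sigmoid x))) x := by
    intro x
    rw [hFfun]
    exact (hJd (sigmoid x)).comp x (sigmoid_hasDerivAt x)
  have hderivθ : deriv θ s = D (sigmoid (θ s)) * (sigmoid (θ s) * (1 - sigmoid (θ s))) := by
    rw [hflow s hs, (hFd (θ s)).deriv]
  have hpd : HasDerivAt p (sigmoid (θ s) * (1 - sigmoid (θ s)) * deriv θ s) s := by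
    rw [hpfun]
    exact (sigmoid_hasDerivAt (θ s)).comp s hθd
  have hps : p s = sigmoid (θ s) := hp s
  have hderivJ : deriv J (p s) = D (sigmoid (θ s)) := by
    rw [hps]; exact (hJd _).deriv
  have hmain : HasDerivAt p (p s ^ 2 * (1 - p s) ^ 2 * deriv J (p s)) s := by
    convert hpd using 1
    rw [hderivJ, hps, hderivθ]
    ring
  refine ⟨hmain, ?_⟩
  have hDle : D (sigmoid (θ s)) ≤ -μmin := by
    have hterm : ∀ t ∈ Finset.Icc 1 L,
        (0 : ℝ) ≤ μ t * (((t - 1 : ℕ) : ℝ) * (1 - sigmoid (θ s)) ^ (t - 1 - 1)) := by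
      intro t ht
      have h1 : 0 ≤ μ t := le_trans hμmin.le (hμ t ht)
      have h2 : (0:ℝ) ≤ 1 - sigmoid (θ s) := by linarith
      positivity
    have h2mem : 2 ∈ Finset.Icc 1 L := by
      simp [Finset.mem_Icc]; omega
    have hsingle : μ 2 * (((2 - 1 : ℕ) : ℝ) * (1 - sigmoid (θ s)) ^ (2 - 1 - 1)) ≤
        ∑ t ∈ Finset.Icc 1 L, μ t * (((t - 1 : ℕ) : ℝ) * (1 - sigmoid (θ s)) ^ (t - 1 - 1)) :=
      Finset.single_le_sum hterm h2mem
    have hsimp : μ 2 * (((2 - 1 : ℕ) : ℝ) * (1 - sigmoid (θ s)) ^ (2 - 1 - 1)) = μ 2 := by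
      norm_num
    have hμ2 : μmin ≤ μ 2 := hμ 2 h2mem
    have : D (sigmoid (θ s)) = -∑ t ∈ Finset.Icc 1 L,
        μ t * (((t - 1 : ℕ) : ℝ) * (1 - sigmoid (θ s)) ^ (t - 1 - 1)) := by
      rw [hD]
      rw [← Finset.sum_neg_distrib]
      apply Finset.sum_congr rfl
      intro t _; ring
    rw [this]
    rw [hsimp] at hsingle
    linarith
  rw [hmain.deriv]
  have hnn : 0 ≤ p s ^ 2 * (1 - p s) ^ 2 := by positivity
  rw [hderivJ]
  nlinarith [mul_le_mul_of_nonneg_left hDle hnn]
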